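/- arXiv:2605.18106 — 4 statements merged into one kernel-verified Lean document; each statement's English description precedes it below -/
import Mathlib

section
/- Let e, d be positive integers, 𝟙 ∈ ℝ^e the all-ones vector, and Π := I_e − (1/e)𝟙𝟙ᵀ. Let Ψ be a map from e×e real matrices to e×e real matrices such that (a) Ψ(P X Pᵀ) = P Ψ(X) Pᵀ for every symmetric positive semidefinite X and every e×e permutation matrix P, and (b) for every symmetric positive semidefinite X and every w ∈ ℝ^e with 𝟙ᵀw = 0, one has 𝟙ᵀ(Ψ(X) w) = 0. Define, for an e×d real matrix D, D_c := Π D and 𝒰(D) := Ψ(D_c D_cᵀ) · D_c. Then for every e×d real matrix D, every e×e permutation matrix P, and every a ∈ ℝ^d: 𝒰(P D + 𝟙 aᵀ) = P · 𝒰(D), and 𝟙ᵀ 𝒰(D) = 0 (every column sum of 𝒰(D) is zero). -/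
/-!
The centering projector `Π` commutes with every permutation matrix `P` and annihilates `𝟙 aᵀ`,
so the centered input transforms as `Π (P D + 𝟙 aᵀ) = P (Π D)`; the Gram matrix then transforms
by conjugation, `(P D_c)(P D_c)ᵀ = P (D_c D_cᵀ) Pᵀ`, and equivariance of `Ψ` on this PSD matrix
together with `Pᵀ P = 1` gives `𝒰(P D + 𝟙 aᵀ) = P 𝒰(D)`. The columns of `D_c` are centered
because `𝟙ᵀ Π = 0`, and `Ψ(D_c D_cᵀ)` keeps them centered, so the columns of `𝒰(D)` sum to zero.
-/

open Matrix

namespace Matrix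

variable {n m K R : Type*} [Fintype n]

lemma sum_mul_apply_eq_zero [NonUnitalNonAssocSemiring R] {A : Matrix n n R} {B : Matrix n m R}
    (hA : ∀ w : n → R, ∑ i, w i = 0 → ∑ i, (A *ᵥ w) i = 0) (hB : ∀ j, ∑ i, B i j = 0)
    (j : m) :
    ∑ i, (A * B) i j = 0 :=
  hA (fun i => B i j) (hB j)

variable [DecidableEq n]

section Centering

variable (n K) in
def centering [Field K] : Matrix n n K :=
  1 - (Fintype.card n : K)⁻¹ • vecMulVec (fun _ => 1) (fun _ => 1)

variable [Field K]

lemma centering_mul_permMatrix (σ : Equiv.Perm n) :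
    centering n K * σ.permMatrix K = σ.permMatrix K * centering n K := by
  have hJP : vecMulVec (fun _ => 1) (fun _ => 1) * σ.permMatrix K
      = vecMulVec (fun _ : n => (1 : K)) (fun _ => 1) := by
    rw [vecMulVec_mul, vecMul_permMatrix]
    rfl
  have hPJ : σ.permMatrix K * vecMulVec (fun _ => 1) (fun _ => 1)
      = vecMulVec (fun _ : n => (1 : K)) (fun _ => 1) := by
    rw [mul_vecMulVec, permMatrix_mulVec]
    rfl
  rw [centering, sub_mul, mul_sub, Matrix.one_mul, Matrix.mul_one, Matrix.smul_mul,
    Matrix.mul_smul, hJP, hPJ]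

variable [CharZero K] [Nonempty n]

lemma centering_mulVec_one : centering n K *ᵥ (fun _ => 1) = 0 := by
  ext i
  simp [centering, sub_mulVec, smul_mulVec, vecMulVec_mulVec, dotProduct, Fintype.card_ne_zero]

lemma one_vecMul_centering : (fun _ => 1) ᵥ* centering n K = 0 := by
  ext i
  simp [centering, vecMul_sub, vecMul_smul, vecMul_vecMulVec, dotProduct, Fintype.card_ne_zero]

lemma centering_mul_vecMulVec_one (a : m → K) :
    centering n K * vecMulVec (fun _ : n => (1 : K)) a = 0 := by
  rw [mul_vecMulVec, centering_mulVec_one, zero_vecMulVec]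

lemma one_vecMul_centering_mul (M : Matrix n m K) :
    (fun _ => 1) ᵥ* (centering n K * M) = 0 := by
  rw [← vecMul_vecMul, one_vecMul_centering, zero_vecMul]

lemma sum_centering_mul_apply (M : Matrix n m K) (j : m) :
    ∑ i, (centering n K * M) i j = 0 := by
  simpa [vecMul, dotProduct] using congrFun (one_vecMul_centering_mul M) j

lemma centering_mul_permMatrix_mul_add_vecMulVec_one (σ : Equiv.Perm n)
    (M : Matrix n m K) (a : m → K) :
    centering n K * (σ.permMatrix K * M + vecMulVec (fun _ => 1) a)
      = σ.permMatrix K * (centering n K * M) := by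
  rw [Matrix.mul_add, centering_mul_vecMulVec_one, add_zero, ← Matrix.mul_assoc,
    centering_mul_permMatrix, Matrix.mul_assoc]

end Centering

variable [CommSemiring R]

lemma transpose_permMatrix_mul_self (σ : Equiv.Perm n) :
    (σ.permMatrix R)ᵀ * σ.permMatrix R = 1 := by
  rw [transpose_permMatrix, ← permMatrix_mul, mul_inv_cancel, permMatrix_one]

lemma permMatrix_mul_mul_transpose_permMatrix_mul [Fintype m] (σ : Equiv.Perm n)
    (M : Matrix n m R) :
    σ.permMatrix R * M * (σ.permMatrix R * M)ᵀ
      = σ.permMatrix R * (M * Mᵀ) * (σ.permMatrix R)ᵀ := by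
  simp only [transpose_mul, Matrix.mul_assoc]

lemma map_gram_mul_permMatrix_mul [Fintype m] {Ψ : Matrix n n R → Matrix n n R}
    (σ : Equiv.Perm n) (M : Matrix n m R)
    (hΨ : Ψ (σ.permMatrix R * (M * Mᵀ) * (σ.permMatrix R)ᵀ)
      = σ.permMatrix R * Ψ (M * Mᵀ) * (σ.permMatrix R)ᵀ) :
    Ψ (σ.permMatrix R * M * (σ.permMatrix R * M)ᵀ) * (σ.permMatrix R * M)
      = σ.permMatrix R * (Ψ (M * Mᵀ) * M) := by
  rw [permMatrix_mul_mul_transpose_permMatrix_mul, hΨ, Matrix.mul_assoc _ _ (_ * M),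
    ← Matrix.mul_assoc _ _ M, transpose_permMatrix_mul_self, Matrix.one_mul, Matrix.mul_assoc]

end Matrix

theorem centered_left_spectral_router_compatible_general
    {e d : ℕ} (he : 0 < e)
    (Ψ : Matrix (Fin e) (Fin e) ℝ → Matrix (Fin e) (Fin e) ℝ)
    -- (a) permutation equivariance of `Ψ` on positive semidefinite matrices
    (hΨperm : ∀ X : Matrix (Fin e) (Fin e) ℝ, X.PosSemidef →
      ∀ P : Matrix (Fin e) (Fin e) ℝ, (∃ σ : Equiv.Perm (Fin e), P = σ.permMatrix ℝ) →
        Ψ (P * X * Pᵀ) = P * Ψ X * Pᵀ)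
    -- (b) `Ψ(X)` maps the centered subspace `{w : 𝟙ᵀw = 0}` to itself
    (hΨcenter : ∀ X : Matrix (Fin e) (Fin e) ℝ, X.PosSemidef →
      ∀ w : Fin e → ℝ, (∑ i, w i) = 0 → (∑ i, (Ψ X *ᵥ w) i) = 0)
    -- `Π = I − (1/e) 𝟙𝟙ᵀ`
    (Proj : Matrix (Fin e) (Fin e) ℝ)
    (hProj : Proj = 1 - (e : ℝ)⁻¹ • vecMulVec (fun _ => (1 : ℝ)) (fun _ => (1 : ℝ)))
    -- `𝒰(D) = Ψ(D_c D_cᵀ) ⬝ D_c` with `D_c = Π D`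
    (U : Matrix (Fin e) (Fin d) ℝ → Matrix (Fin e) (Fin d) ℝ)
    (hU : ∀ D, U D = Ψ ((Proj * D) * (Proj * D)ᵀ) * (Proj * D)) :
    ∀ (D : Matrix (Fin e) (Fin d) ℝ) (P : Matrix (Fin e) (Fin e) ℝ) (a : Fin d → ℝ),
      (∃ σ : Equiv.Perm (Fin e), P = σ.permMatrix ℝ) →
      U (P * D + vecMulVec (fun _ => (1 : ℝ)) a) = P * U D ∧
      ∀ j : Fin d, (∑ i, U D i j) = 0 := by
  have : Nonempty (Fin e) := Fin.pos_iff_nonempty.mp he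
  obtain rfl : Proj = centering (Fin e) ℝ := by rw [hProj, centering, Fintype.card_fin]
  rintro D _ a ⟨σ, rfl⟩
  have hgram : (centering (Fin e) ℝ * D * (centering (Fin e) ℝ * D)ᵀ).PosSemidef := by
    simpa only [conjTranspose_eq_transpose_of_trivial]
      using posSemidef_self_mul_conjTranspose (centering (Fin e) ℝ * D)
  refine ⟨?_, fun j => ?_⟩
  · rw [hU, hU, centering_mul_permMatrix_mul_add_vecMulVec_one]
    exact map_gram_mul_permMatrix_mul σ _ (hΨperm _ hgram _ ⟨σ, rfl⟩)
  · rw [hU]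
    exact sum_mul_apply_eq_zero (hΨcenter _ hgram) (sum_centering_mul_apply D) j

/-- Router-compatibility of the centered left-spectral update.
Let `Π = I − (1/e) 𝟙𝟙ᵀ` and `𝒰(D) = Ψ(D_c D_cᵀ) D_c` with `D_c = Π D`, where `Ψ`
is permutation equivariant on PSD matrices and preserves the centered subspace.
Then `𝒰(P D + 𝟙 aᵀ) = P 𝒰(D)` and `𝟙ᵀ 𝒰(D) = 0` (all column sums vanish). -/
theorem centered_left_spectral_router_compatible
    {e d : ℕ} (he : 0 < e) (hd : 0 < d)
    (Ψ : Matrix (Fin e) (Fin e) ℝ → Matrix (Fin e) (Fin e) ℝ)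
    -- (a) permutation equivariance of `Ψ` on positive semidefinite matrices
    (hΨperm : ∀ X : Matrix (Fin e) (Fin e) ℝ, X.PosSemidef →
      ∀ P : Matrix (Fin e) (Fin e) ℝ, (∃ σ : Equiv.Perm (Fin e), P = σ.permMatrix ℝ) →
        Ψ (P * X * Pᵀ) = P * Ψ X * Pᵀ)
    -- (b) `Ψ(X)` maps the centered subspace `{w : 𝟙ᵀw = 0}` to itself
    (hΨcenter : ∀ X : Matrix (Fin e) (Fin e) ℝ, X.PosSemidef →
      ∀ w : Fin e → ℝ, (∑ i, w i) = 0 → (∑ i, (Ψ X *ᵥ w) i) = 0)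
    -- `Π = I − (1/e) 𝟙𝟙ᵀ`
    (Proj : Matrix (Fin e) (Fin e) ℝ)
    (hProj : Proj = 1 - (e : ℝ)⁻¹ • vecMulVec (fun _ => (1 : ℝ)) (fun _ => (1 : ℝ)))
    -- `𝒰(D) = Ψ(D_c D_cᵀ) ⬝ D_c` with `D_c = Π D`
    (U : Matrix (Fin e) (Fin d) ℝ → Matrix (Fin e) (Fin d) ℝ)
    (hU : ∀ D, U D = Ψ ((Proj * D) * (Proj * D)ᵀ) * (Proj * D)) :
    ∀ (D : Matrix (Fin e) (Fin d) ℝ) (P : Matrix (Fin e) (Fin e) ℝ) (a : Fin d → ℝ),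
      (∃ σ : Equiv.Perm (Fin e), P = σ.permMatrix ℝ) →
      U (P * D + vecMulVec (fun _ => (1 : ℝ)) a) = P * U D ∧
      ∀ j : Fin d, (∑ i, U D i j) = 0 :=
  centered_left_spectral_router_compatible_general he Ψ hΨperm hΨcenter Proj hProj U hU
end

section
/- Let E be a real inner product space, f : E → ℝ, and G : E → E such that f has gradient G(x) at every x ∈ E and G is Lipschitz with constant L > 0. Let T : E → E and 0 < c₁ ≤ c₂ satisfy c₁‖g‖² ≤ ⟪g, T(g)⟫ and ‖T(g)‖² ≤ c₂‖g‖² for all g ∈ E. Then for every W ∈ E and every γ > 0, f(W − γ T(G(W))) ≤ f(W) − (c₁γ − (L c₂/2)γ²)‖G(W)‖². In particular, if 0 < γ < 2c₁/(Lc₂) then f(W − γ T(G(W))) ≤ f(W). -/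
open scoped RealInnerProductSpace

open Set

/-! On the segment from `W` in a direction `v`, the Lipschitz bound on the gradient integrates to
the quadratic upper bound `f (W + v) ≤ f W + ⟪G W, v⟫ + L / 2 * ‖v‖ ^ 2`. For the step
`v = -γ • T (G W)` the alignment of `T` bounds the linear term by `-c₁ γ ‖G W‖²` and the norm
control bounds the quadratic term by `(L c₂ / 2) γ² ‖G W‖²`. -/

theorem le_add_deriv_add_half_of_deriv_sub_le {φ φ' : ℝ → ℝ} {K : ℝ}
    (hφ : ∀ t ∈ Icc (0 : ℝ) 1, HasDerivAt φ (φ' t) t)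
    (hφ' : ∀ t ∈ Icc (0 : ℝ) 1, φ' t - φ' 0 ≤ K * t) :
    φ 1 ≤ φ 0 + φ' 0 + K / 2 := by
  set ψ : ℝ → ℝ := fun t => φ t - t * φ' 0 - K / 2 * t ^ 2
  have hψ : ∀ t ∈ Icc (0 : ℝ) 1, HasDerivAt ψ (φ' t - φ' 0 - K * t) t := by
    intro t ht
    exact (((hφ t ht).sub (hasDerivAt_mul_const (φ' 0))).sub
      ((hasDerivAt_pow 2 t).const_mul (K / 2))).congr_deriv (by ring)
  have hanti : AntitoneOn ψ (Icc 0 1) := by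
    refine antitoneOn_of_hasDerivWithinAt_nonpos (f' := fun t => φ' t - φ' 0 - K * t)
      (convex_Icc 0 1) (fun t ht => (hψ t ht).continuousAt.continuousWithinAt)
      (fun t ht => ?_) (fun t ht => ?_)
    · rw [interior_Icc] at ht
      exact (hψ t (Ioo_subset_Icc_self ht)).hasDerivWithinAt
    · rw [interior_Icc] at ht
      linarith [hφ' t (Ioo_subset_Icc_self ht)]
  have := hanti (left_mem_Icc.mpr zero_le_one) (right_mem_Icc.mpr zero_le_one) zero_le_one
  simp only [ψ] at this
  linarith

theorem image_add_le_of_hasFDerivAt_of_lipschitz {E : Type*} [NormedAddCommGroup E]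
    [NormedSpace ℝ E] {f : E → ℝ} {f' : E → StrongDual ℝ E} {L : ℝ}
    (hf : ∀ x, HasFDerivAt f (f' x) x) (hlip : ∀ x y, ‖f' x - f' y‖ ≤ L * ‖x - y‖) (x v : E) :
    f (x + v) ≤ f x + f' x v + L / 2 * ‖v‖ ^ 2 := by
  have hline : ∀ t : ℝ, HasDerivAt (fun t : ℝ => f (x + t • v)) (f' (x + t • v) v) t := by
    intro t
    have hpath : HasDerivAt (fun t : ℝ => x + t • v) v t := by
      simpa using ((hasDerivAt_id t).smul_const v).const_add x
    exact (hf (x + t • v)).comp_hasDerivAt t hpath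
  have hslope : ∀ t ∈ Icc (0 : ℝ) 1,
      f' (x + t • v) v - f' (x + (0 : ℝ) • v) v ≤ L * ‖v‖ ^ 2 * t := by
    intro t ht
    calc f' (x + t • v) v - f' (x + (0 : ℝ) • v) v = (f' (x + t • v) - f' x) v := by simp
      _ ≤ ‖f' (x + t • v) - f' x‖ * ‖v‖ :=
          (Real.le_norm_self _).trans (ContinuousLinearMap.le_opNorm _ _)
      _ ≤ L * ‖t • v‖ * ‖v‖ := by
          gcongr
          simpa using hlip (x + t • v) x
      _ = L * ‖v‖ ^ 2 * t := by rw [norm_smul, Real.norm_of_nonneg ht.1]; ring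
  have := le_add_deriv_add_half_of_deriv_sub_le (fun t _ => hline t) hslope
  simp only [one_smul, zero_smul, add_zero] at this
  linarith

theorem image_add_le_of_hasGradientAt_of_lipschitz {E : Type*} [NormedAddCommGroup E]
    [InnerProductSpace ℝ E] [CompleteSpace E] {f : E → ℝ} {G : E → E} {L : ℝ}
    (hgrad : ∀ x, HasGradientAt f (G x) x) (hlip : ∀ x y, ‖G x - G y‖ ≤ L * ‖x - y‖) (x v : E) :
    f (x + v) ≤ f x + ⟪G x, v⟫ + L / 2 * ‖v‖ ^ 2 :=
  image_add_le_of_hasFDerivAt_of_lipschitz (fun x => (hgrad x).hasFDerivAt)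
    (fun x y => by simpa only [← map_sub, LinearIsometryEquiv.norm_map] using hlip x y) x v

/-- Descent lemma for aligned, norm-controlled update maps:
if `f` has an `L`-Lipschitz gradient `G`, and `T` satisfies
`c₁‖g‖² ≤ ⟪g, T g⟫` and `‖T g‖² ≤ c₂‖g‖²`, then for every `W` and `γ > 0`,
`f(W − γ T(G W)) ≤ f(W) − (c₁γ − (Lc₂/2)γ²)‖G W‖²`; in particular the step is a
descent step whenever `0 < γ < 2c₁/(Lc₂)`. -/
theorem descent_lemma_spectral_optimizer
    {E : Type*} [NormedAddCommGroup E] [InnerProductSpace ℝ E] [CompleteSpace E]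
    (f : E → ℝ) (G : E → E) (L : ℝ) (hL : 0 < L)
    (hgrad : ∀ x, HasGradientAt f (G x) x)
    (hlip : ∀ x y, ‖G x - G y‖ ≤ L * ‖x - y‖)
    (T : E → E) (c₁ c₂ : ℝ) (hc₁ : 0 < c₁) (hc₁₂ : c₁ ≤ c₂)
    (halign : ∀ g : E, c₁ * ‖g‖ ^ 2 ≤ ⟪g, T g⟫)
    (hnorm : ∀ g : E, ‖T g‖ ^ 2 ≤ c₂ * ‖g‖ ^ 2) :
    ∀ (W : E) (γ : ℝ), 0 < γ →
      f (W - γ • T (G W)) ≤ f W - (c₁ * γ - L * c₂ / 2 * γ ^ 2) * ‖G W‖ ^ 2 ∧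
      (γ < 2 * c₁ / (L * c₂) → f (W - γ • T (G W)) ≤ f W) := by
  intro W γ hγ
  have hdescent : f (W - γ • T (G W)) ≤ f W - (c₁ * γ - L * c₂ / 2 * γ ^ 2) * ‖G W‖ ^ 2 :=
    calc f (W - γ • T (G W))
        ≤ f W - γ * ⟪G W, T (G W)⟫ + L / 2 * γ ^ 2 * ‖T (G W)‖ ^ 2 := by
          have := image_add_le_of_hasGradientAt_of_lipschitz hgrad hlip W (-(γ • T (G W)))
          rwa [← sub_eq_add_neg, inner_neg_right, real_inner_smul_right, norm_neg, norm_smul,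
            mul_pow, Real.norm_eq_abs, sq_abs, ← sub_eq_add_neg, ← mul_assoc] at this
      _ ≤ f W - γ * (c₁ * ‖G W‖ ^ 2) + L / 2 * γ ^ 2 * (c₂ * ‖G W‖ ^ 2) := by
          gcongr
          exacts [halign _, hnorm _]
      _ = f W - (c₁ * γ - L * c₂ / 2 * γ ^ 2) * ‖G W‖ ^ 2 := by ring
  refine ⟨hdescent, fun hγ_small => ?_⟩
  have hLc₂ : 0 < L * c₂ := mul_pos hL (hc₁.trans_le hc₁₂)
  have hcoeff : 0 ≤ c₁ * γ - L * c₂ / 2 * γ ^ 2 := by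
    have := (lt_div_iff₀ hLc₂).mp hγ_small
    nlinarith
  linarith [mul_nonneg hcoeff (sq_nonneg ‖G W‖)]
end

section
/- Let E be a real inner product space, f : E → ℝ, and G : E → E such that f has gradient G(x) at every x ∈ E and G is Lipschitz with constant L > 0. Assume f⋆ ∈ ℝ satisfies f⋆ ≤ f(x) for all x ∈ E. Let T : E → E and 0 < c₁ ≤ c₂ satisfy c₁‖g‖² ≤ ⟪g, T(g)⟫ and ‖T(g)‖² ≤ c₂‖g‖² for all g ∈ E. Fix a constant step size γ with 0 < γ < 2c₁/(Lc₂), let W₀ ∈ E and define W_{k+1} := W_k − γ T(G(W_k)). Then for every positive integer T, ∑_{k=0}^{T−1} ‖G(W_k)‖² ≤ (f(W₀) − f⋆)/(γ(c₁ − Lc₂γ/2)), and consequently min_{0 ≤ k < T} ‖G(W_k)‖² ≤ (f(W₀) − f⋆)/(T γ (c₁ − Lc₂γ/2)). -/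
open scoped RealInnerProductSpace

/-!
Smoothness gives the descent lemma `f (x + v) ≤ f x + ⟪G x, v⟫ + L/2 ‖v‖²`. Along the step
`v = -γ T(G x)` the alignment and norm bounds on `T` turn this into a decrease of `f` by at least
`γ (c₁ - L c₂ γ / 2) ‖G x‖²`, a positive multiple of `‖G x‖²` for `γ < 2c₁/(Lc₂)`.
Summing over the iterates telescopes, and `f ≥ f⋆` bounds the total decrease.
-/

section Descent

variable {E : Type*} [NormedAddCommGroup E] [InnerProductSpace ℝ E] [CompleteSpace E]
  {f : E → ℝ} {G : E → E} {L : ℝ}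

theorem HasGradientAt.hasDerivAt_comp_add_smul {g x v : E} {t : ℝ}
    (hf : HasGradientAt f g (x + t • v)) :
    HasDerivAt (fun s : ℝ => f (x + s • v)) ⟪g, v⟫ t := by
  have hline : HasDerivAt (fun s : ℝ => x + s • v) v t := by
    simpa using ((hasDerivAt_id t).smul_const v).const_add x
  have h := hf.hasFDerivAt.comp_hasDerivAt t hline
  exact (by simpa [InnerProductSpace.toDual_apply_apply] using h :
    HasDerivAt (f ∘ fun s : ℝ => x + s • v) ⟪g, v⟫ t)

theorem apply_add_le_of_lipschitz_gradient (hgrad : ∀ x, HasGradientAt f (G x) x)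
    (hlip : ∀ x y, ‖G x - G y‖ ≤ L * ‖x - y‖) (x v : E) :
    f (x + v) ≤ f x + ⟪G x, v⟫ + L / 2 * ‖v‖ ^ 2 := by
  set φ : ℝ → ℝ := fun t => f (x + t • v) - t * ⟪G x, v⟫ - L / 2 * t ^ 2 * ‖v‖ ^ 2
  have hφ : ∀ t, HasDerivAt φ (⟪G (x + t • v), v⟫ - ⟪G x, v⟫ - L * t * ‖v‖ ^ 2) t := by
    intro t
    refine ((((hgrad (x + t • v)).hasDerivAt_comp_add_smul.sub
      ((hasDerivAt_id t).mul_const ⟪G x, v⟫)).sub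
      (((hasDerivAt_pow 2 t).const_mul (L / 2)).mul_const (‖v‖ ^ 2)))).congr_deriv ?_
    push_cast
    ring
  have hφ' : ∀ t ∈ interior (Set.Ici (0 : ℝ)),
      ⟪G (x + t • v), v⟫ - ⟪G x, v⟫ - L * t * ‖v‖ ^ 2 ≤ 0 := by
    intro t ht
    rw [interior_Ici, Set.mem_Ioi] at ht
    have hG : ‖G (x + t • v) - G x‖ ≤ L * (t * ‖v‖) := by
      simpa [norm_smul, abs_of_pos ht] using hlip (x + t • v) x
    have := calc ⟪G (x + t • v), v⟫ - ⟪G x, v⟫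
        _ = ⟪G (x + t • v) - G x, v⟫ := (inner_sub_left ..).symm
        _ ≤ ‖G (x + t • v) - G x‖ * ‖v‖ := real_inner_le_norm _ _
        _ ≤ L * (t * ‖v‖) * ‖v‖ := by gcongr
        _ = L * t * ‖v‖ ^ 2 := by ring
    linarith
  have hanti : AntitoneOn φ (Set.Ici 0) :=
    antitoneOn_of_hasDerivWithinAt_nonpos (convex_Ici 0)
      (fun t _ => (hφ t).continuousAt.continuousWithinAt)
      (fun t _ => (hφ t).hasDerivWithinAt) hφ'
  have := hanti (Set.mem_Ici.mpr le_rfl) (Set.mem_Ici.mpr zero_le_one) zero_le_one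
  simp only [φ, zero_smul, add_zero, one_smul] at this
  linarith

theorem apply_sub_smul_le_of_lipschitz_gradient (hL : 0 ≤ L)
    (hgrad : ∀ x, HasGradientAt f (G x) x) (hlip : ∀ x y, ‖G x - G y‖ ≤ L * ‖x - y‖)
    {x d : E} {c₁ c₂ γ : ℝ} (hγ : 0 ≤ γ) (halign : c₁ * ‖G x‖ ^ 2 ≤ ⟪G x, d⟫)
    (hnorm : ‖d‖ ^ 2 ≤ c₂ * ‖G x‖ ^ 2) :
    f (x - γ • d) ≤ f x - γ * (c₁ - L * c₂ * γ / 2) * ‖G x‖ ^ 2 := by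
  have h := apply_add_le_of_lipschitz_gradient hgrad hlip x (-(γ • d))
  rw [← sub_eq_add_neg, inner_neg_right, real_inner_smul_right, norm_neg, norm_smul,
    Real.norm_eq_abs, abs_of_nonneg hγ, mul_pow] at h
  have e1 : γ * (c₁ * ‖G x‖ ^ 2) ≤ γ * ⟪G x, d⟫ := by gcongr
  have e2 : L / 2 * (γ ^ 2 * ‖d‖ ^ 2) ≤ L / 2 * (γ ^ 2 * (c₂ * ‖G x‖ ^ 2)) := by gcongr
  linarith

end Descent

theorem mul_sum_range_le_sub_of_le_sub {u a : ℕ → ℝ} {α : ℝ}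
    (h : ∀ k, u (k + 1) + α * a k ≤ u k) (n : ℕ) :
    α * ∑ k ∈ Finset.range n, a k ≤ u 0 - u n := by
  rw [Finset.mul_sum, ← Finset.sum_range_sub']
  exact Finset.sum_le_sum fun k _ => by linarith [h k]

theorem exists_le_div_of_sum_range_le {a : ℕ → ℝ} {n : ℕ} (hn : 0 < n) {B : ℝ}
    (h : ∑ k ∈ Finset.range n, a k ≤ B) : ∃ k < n, a k ≤ B / n := by
  have hsum : ∑ k ∈ Finset.range n, a k ≤ ∑ _k ∈ Finset.range n, B / n := by
    rw [Finset.sum_const, Finset.card_range, nsmul_eq_mul, mul_div_cancel₀ _ (by positivity)]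
    exact h
  obtain ⟨k, hk, hak⟩ := Finset.exists_le_of_sum_le (Finset.nonempty_range_iff.mpr hn.ne') hsum
  exact ⟨k, Finset.mem_range.mp hk, hak⟩

theorem sublinear_stationarity_spectral_optimizer_general
    {E : Type*} [NormedAddCommGroup E] [InnerProductSpace ℝ E] [CompleteSpace E]
    (f : E → ℝ) (G : E → E) (L : ℝ) (hL : 0 < L)
    (hgrad : ∀ x, HasGradientAt f (G x) x)
    (hlip : ∀ x y, ‖G x - G y‖ ≤ L * ‖x - y‖)
    (fstar : ℝ) (hfstar : ∀ x, fstar ≤ f x)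
    (T : E → E) (c₁ c₂ : ℝ) (hc₁ : 0 < c₁)
    (halign : ∀ g : E, c₁ * ‖g‖ ^ 2 ≤ ⟪g, T g⟫)
    (hnorm : ∀ g : E, ‖T g‖ ^ 2 ≤ c₂ * ‖g‖ ^ 2)
    (γ : ℝ) (hγ0 : 0 < γ) (hγ : γ < 2 * c₁ / (L * c₂))
    (W : ℕ → E) (hrec : ∀ k : ℕ, W (k + 1) = W k - γ • T (G (W k))) :
    ∀ tt : ℕ, 0 < tt →
      (∑ k ∈ Finset.range tt, ‖G (W k)‖ ^ 2) ≤
        (f (W 0) - fstar) / (γ * (c₁ - L * c₂ * γ / 2)) ∧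
      ∃ k < tt, ‖G (W k)‖ ^ 2 ≤
        (f (W 0) - fstar) / (tt * γ * (c₁ - L * c₂ * γ / 2)) := by
  have hLc₂ : 0 < L * c₂ := (div_pos_iff_of_pos_left (by positivity)).mp (hγ0.trans hγ)
  have hα : 0 < γ * (c₁ - L * c₂ * γ / 2) := by
    have := (lt_div_iff₀ hLc₂).mp hγ
    apply mul_pos hγ0
    linarith
  have hdecrease (k : ℕ) :
      f (W (k + 1)) + γ * (c₁ - L * c₂ * γ / 2) * ‖G (W k)‖ ^ 2 ≤ f (W k) := by
    have := apply_sub_smul_le_of_lipschitz_gradient hL.le hgrad hlip hγ0.le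
      (halign (G (W k))) (hnorm (G (W k)))
    rw [hrec k]
    linarith
  intro tt htt
  have hsum : ∑ k ∈ Finset.range tt, ‖G (W k)‖ ^ 2 ≤
      (f (W 0) - fstar) / (γ * (c₁ - L * c₂ * γ / 2)) := by
    rw [le_div_iff₀' hα]
    linarith [mul_sum_range_le_sub_of_le_sub (u := fun k => f (W k))
      (a := fun k => ‖G (W k)‖ ^ 2) hdecrease tt, hfstar (W tt)]
  refine ⟨hsum, ?_⟩
  obtain ⟨k, hk, hbound⟩ := exists_le_div_of_sum_range_le htt hsum
  refine ⟨k, hk, hbound.trans_eq ?_⟩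
  rw [div_div]
  ring

/-- Sublinear convergence to stationarity: under `L`-Lipschitz
gradients, alignment/norm control constants `0 < c₁ ≤ c₂` for `T`, a lower bound
`f⋆` for `f`, and a constant step size `0 < γ < 2c₁/(Lc₂)`, the iterates
`W_{k+1} = W_k − γ T(G(W_k))` satisfy
`∑_{k<T} ‖G(W_k)‖² ≤ (f(W₀) − f⋆)/(γ(c₁ − Lc₂γ/2))`, and hence the minimum of
`‖G(W_k)‖²` over `k < T` is at most `(f(W₀) − f⋆)/(Tγ(c₁ − Lc₂γ/2))`. -/
theorem sublinear_stationarity_spectral_optimizer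
    {E : Type*} [NormedAddCommGroup E] [InnerProductSpace ℝ E] [CompleteSpace E]
    (f : E → ℝ) (G : E → E) (L : ℝ) (hL : 0 < L)
    (hgrad : ∀ x, HasGradientAt f (G x) x)
    (hlip : ∀ x y, ‖G x - G y‖ ≤ L * ‖x - y‖)
    (fstar : ℝ) (hfstar : ∀ x, fstar ≤ f x)
    (T : E → E) (c₁ c₂ : ℝ) (hc₁ : 0 < c₁) (hc₁₂ : c₁ ≤ c₂)
    (halign : ∀ g : E, c₁ * ‖g‖ ^ 2 ≤ ⟪g, T g⟫)
    (hnorm : ∀ g : E, ‖T g‖ ^ 2 ≤ c₂ * ‖g‖ ^ 2)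
    (γ : ℝ) (hγ0 : 0 < γ) (hγ : γ < 2 * c₁ / (L * c₂))
    (W : ℕ → E) (hrec : ∀ k : ℕ, W (k + 1) = W k - γ • T (G (W k))) :
    ∀ tt : ℕ, 0 < tt →
      (∑ k ∈ Finset.range tt, ‖G (W k)‖ ^ 2) ≤
        (f (W 0) - fstar) / (γ * (c₁ - L * c₂ * γ / 2)) ∧
      ∃ k < tt, ‖G (W k)‖ ^ 2 ≤
        (f (W 0) - fstar) / (tt * γ * (c₁ - L * c₂ * γ / 2)) :=
  sublinear_stationarity_spectral_optimizer_general f G L hL hgrad hlip fstar hfstar T c₁ c₂ hc₁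
    halign hnorm γ hγ0 hγ W hrec
end

section
/- Let E be a real inner product space, f : E → ℝ, and G : E → E such that f has gradient G(x) at every x ∈ E and G is Lipschitz with constant L > 0. Assume the μ-Polyak–Łojasiewicz condition: there are μ > 0 and f⋆ ∈ ℝ with f⋆ ≤ f(x) and ‖G(x)‖² ≥ 2μ(f(x) − f⋆) for all x ∈ E. Let T : E → E and let R̲ > 0 and α > 0 satisfy, for all g ∈ E, R̲·‖T(g)‖² ≤ ⟪g, T(g)⟫ and α‖g‖² ≤ ⟪g, T(g)⟫. Then for every γ with 0 < γ < 2R̲/L and every W ∈ E, f(W − γ T(G(W))) − f⋆ ≤ (1 − 2μαγ(1 − Lγ/(2R̲))) · (f(W) − f⋆). -/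
/-!
Along the segment from `x` to `x + v` the derivative of `f` drifts from `⟪G x, v⟫` by at most
`L t ‖v‖²`, which gives the descent lemma `f (x + v) ≤ f x + ⟪G x, v⟫ + L/2 ‖v‖²`. For the step
`v = -γ T g` with `g = G W`, the ratio bound turns the quadratic term into a multiple of
`⟪g, T g⟫`, so the step decreases `f` by `γ (1 - Lγ/(2R̲)) ⟪g, T g⟫`; alignment and the PL
inequality bound `⟪g, T g⟫` below by `2μα (f W - f⋆)`.
-/

open scoped RealInnerProductSpace

section Descent

variable {E : Type*} [NormedAddCommGroup E] [InnerProductSpace ℝ E]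
  {f : E → ℝ} {G : E → E} {L : ℝ}

theorem HasGradientAt.hasDerivAt_add_smul [CompleteSpace E] {g x v : E} {t : ℝ}
    (hf : HasGradientAt f g (x + t • v)) :
    HasDerivAt (fun s : ℝ => f (x + s • v)) ⟪g, v⟫ t := by
  have hline : HasDerivAt (fun s : ℝ => x + s • v) v t := by
    simpa using ((hasDerivAt_id t).smul_const v).const_add x
  have h := (hf.hasFDerivAt.comp t hline.hasFDerivAt).hasDerivAt
  simp only [ContinuousLinearMap.comp_apply, ContinuousLinearMap.toSpanSingleton_apply, one_smul,
    InnerProductSpace.toDual_apply_apply] at h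
  exact h

theorem inner_sub_le_of_lipschitz (hlip : ∀ x y, ‖G x - G y‖ ≤ L * ‖x - y‖)
    (x v : E) {t : ℝ} (ht : 0 ≤ t) :
    ⟪G (x + t • v), v⟫ - ⟪G x, v⟫ ≤ L * t * ‖v‖ ^ 2 :=
  calc ⟪G (x + t • v), v⟫ - ⟪G x, v⟫ = ⟪G (x + t • v) - G x, v⟫ := (inner_sub_left _ _ _).symm
    _ ≤ ‖G (x + t • v) - G x‖ * ‖v‖ := real_inner_le_norm _ _
    _ ≤ L * ‖(x + t • v) - x‖ * ‖v‖ := by gcongr; exact hlip _ _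
    _ = L * t * ‖v‖ ^ 2 := by
      rw [add_sub_cancel_left, norm_smul, Real.norm_of_nonneg ht]; ring

theorem le_add_inner_add_of_lipschitz_gradient [CompleteSpace E]
    (hgrad : ∀ x, HasGradientAt f (G x) x) (hlip : ∀ x y, ‖G x - G y‖ ≤ L * ‖x - y‖) (x v : E) :
    f (x + v) ≤ f x + ⟪G x, v⟫ + L / 2 * ‖v‖ ^ 2 := by
  have hφ (t : ℝ) : HasDerivAt (fun s : ℝ => f (x + s • v)) ⟪G (x + t • v), v⟫ t :=
    (hgrad _).hasDerivAt_add_smul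
  have hB (t : ℝ) : HasDerivAt (fun s : ℝ => f x + s * ⟪G x, v⟫ + L / 2 * s ^ 2 * ‖v‖ ^ 2)
      (⟪G x, v⟫ + L * t * ‖v‖ ^ 2) t := by
    refine ((((hasDerivAt_id t).mul_const ⟪G x, v⟫).const_add (f x)).add
      (((hasDerivAt_pow 2 t).const_mul (L / 2)).mul_const (‖v‖ ^ 2))).congr_deriv ?_
    simp only [one_mul]
    ring
  have key := image_le_of_deriv_right_le_deriv_boundary
    (fun t _ => (hφ t).continuousAt.continuousWithinAt) (fun t _ => (hφ t).hasDerivWithinAt)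
    (by simp) (fun t _ => (hB t).continuousAt.continuousWithinAt)
    (fun t _ => (hB t).hasDerivWithinAt)
    (fun t ht => by linarith [inner_sub_le_of_lipschitz hlip x v ht.1])
    (Set.right_mem_Icc.2 zero_le_one)
  simpa using key

theorem le_sub_of_lipschitz_gradient_of_ratio [CompleteSpace E]
    (hgrad : ∀ x, HasGradientAt f (G x) x) (hlip : ∀ x y, ‖G x - G y‖ ≤ L * ‖x - y‖)
    (hL : 0 ≤ L) {R : ℝ} (hR : 0 < R) {x d : E}
    (hd : R * ‖d‖ ^ 2 ≤ ⟪G x, d⟫) (γ : ℝ) :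
    f (x - γ • d) ≤ f x - γ * (1 - L * γ / (2 * R)) * ⟪G x, d⟫ := by
  have hdesc := le_add_inner_add_of_lipschitz_gradient hgrad hlip x (-(γ • d))
  rw [← sub_eq_add_neg, inner_neg_right, real_inner_smul_right, norm_neg, norm_smul,
    Real.norm_eq_abs, mul_pow, sq_abs] at hdesc
  have hquad : L / 2 * (γ ^ 2 * ‖d‖ ^ 2) ≤ L * γ / (2 * R) * γ * ⟪G x, d⟫ := by
    calc L / 2 * (γ ^ 2 * ‖d‖ ^ 2) = L * γ ^ 2 / (2 * R) * (R * ‖d‖ ^ 2) := by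
          field_simp
      _ ≤ L * γ ^ 2 / (2 * R) * ⟪G x, d⟫ := by gcongr
      _ = L * γ / (2 * R) * γ * ⟪G x, d⟫ := by ring
  linarith

end Descent

theorem linear_convergence_PL_ratio_alignment_general
    {E : Type*} [NormedAddCommGroup E] [InnerProductSpace ℝ E] [CompleteSpace E]
    (f : E → ℝ) (G : E → E) (L : ℝ)
    (hgrad : ∀ x, HasGradientAt f (G x) x)
    (hlip : ∀ x y, ‖G x - G y‖ ≤ L * ‖x - y‖)
    (μ : ℝ) (fstar : ℝ)
    (hPL : ∀ x, ‖G x‖ ^ 2 ≥ 2 * μ * (f x - fstar))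
    (T : E → E) (Rlo α : ℝ) (hRlo : 0 < Rlo) (hα : 0 < α)
    (hratio : ∀ g : E, Rlo * ‖T g‖ ^ 2 ≤ ⟪g, T g⟫)
    (halign : ∀ g : E, α * ‖g‖ ^ 2 ≤ ⟪g, T g⟫) :
    ∀ γ : ℝ, 0 < γ → γ < 2 * Rlo / L →
      ∀ W : E,
        f (W - γ • T (G W)) - fstar ≤
          (1 - 2 * μ * α * γ * (1 - L * γ / (2 * Rlo))) * (f W - fstar) := by
  intro γ hγ hγR W
  have hL : 0 < L := (div_pos_iff_of_pos_left (by positivity)).1 (hγ.trans hγR)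
  have hstep := le_sub_of_lipschitz_gradient_of_ratio hgrad hlip hL.le hRlo (hratio (G W)) γ
  have hrate : 0 ≤ γ * (1 - L * γ / (2 * Rlo)) := by
    have : L * γ / (2 * Rlo) < 1 := (div_lt_one (by positivity)).2 ((lt_div_iff₀' hL).1 hγR)
    exact mul_nonneg hγ.le (by linarith)
  have hinner : 2 * μ * α * (f W - fstar) ≤ ⟪G W, T (G W)⟫ := by
    calc 2 * μ * α * (f W - fstar) = α * (2 * μ * (f W - fstar)) := by ring
      _ ≤ α * ‖G W‖ ^ 2 := by gcongr; exact hPL W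
      _ ≤ ⟪G W, T (G W)⟫ := halign (G W)
  linarith [mul_le_mul_of_nonneg_left hinner hrate]

/-- Linear convergence under the PL condition with ratio and
alignment bounds: if `f` has an `L`-Lipschitz gradient `G`, satisfies the `μ`-PL
inequality relative to a lower bound `f⋆`, and `T` satisfies
`R̲‖T g‖² ≤ ⟪g, T g⟫` and `α‖g‖² ≤ ⟪g, T g⟫` with `R̲, α > 0`, then for every step
size `0 < γ < 2R̲/L` and every `W`,
`f(W − γ T(G W)) − f⋆ ≤ (1 − 2μαγ(1 − Lγ/(2R̲)))(f(W) − f⋆)`. -/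
theorem linear_convergence_PL_ratio_alignment
    {E : Type*} [NormedAddCommGroup E] [InnerProductSpace ℝ E] [CompleteSpace E]
    (f : E → ℝ) (G : E → E) (L : ℝ) (hL : 0 < L)
    (hgrad : ∀ x, HasGradientAt f (G x) x)
    (hlip : ∀ x y, ‖G x - G y‖ ≤ L * ‖x - y‖)
    (μ : ℝ) (hμ : 0 < μ) (fstar : ℝ) (hfstar : ∀ x, fstar ≤ f x)
    (hPL : ∀ x, ‖G x‖ ^ 2 ≥ 2 * μ * (f x - fstar))
    (T : E → E) (Rlo α : ℝ) (hRlo : 0 < Rlo) (hα : 0 < α)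
    (hratio : ∀ g : E, Rlo * ‖T g‖ ^ 2 ≤ ⟪g, T g⟫)
    (halign : ∀ g : E, α * ‖g‖ ^ 2 ≤ ⟪g, T g⟫) :
    ∀ γ : ℝ, 0 < γ → γ < 2 * Rlo / L →
      ∀ W : E,
        f (W - γ • T (G W)) - fstar ≤
          (1 - 2 * μ * α * γ * (1 - L * γ / (2 * Rlo))) * (f W - fstar) :=
  linear_convergence_PL_ratio_alignment_general f G L hgrad hlip μ fstar hPL T Rlo α hRlo hα hratio
    halign
end
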